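/- In the calculus λ_LA𝕂 with the measure ‖·‖, if t → t' by a single reduction step using a rule (r) other than (!), (com1) and (com2), then ‖t'‖ < ‖t‖; and if t → t' by a single (com1) or (com2) step, then ‖t'‖ = ‖t‖. -/
import Mathlib


set_option maxHeartbeats 1000000

/-! ## The ring structure 𝕂 (uniform arity `p`, one relation is equality) -/

structure RingStruct where
  K : Type
  ringK : Ring K
  p : ℕ
  nops : ℕ
  nrels : ℕ
  two_le_p : 2 ≤ p
  nrels_pos : 0 < nrels
  op : Fin nops → (Fin p → K) → K
  rel : Fin nrels → (Fin p → K) → Prop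
  rel_zero_eq : ∀ v : Fin p → K, rel ⟨0, nrels_pos⟩ v ↔ v ⟨0, by omega⟩ = v ⟨1, by omega⟩

/-! ## Terms of λ_LA𝕂 (de Bruijn indices) -/

inductive Tm (S : RingStruct) : Type where
  | var : ℕ → Tm S
  | lam : Tm S → Tm S
  | app : Tm S → Tm S → Tm S
  | bang : Tm S → Tm S
  /-- `letBang u t` is `let u be !x in t`; `t` binds de Bruijn index 0. -/
  | letBang : Tm S → Tm S → Tm S
  | para : Tm S → Tm S
  /-- `letPara u t` is `let u be §x in t`; `t` binds de Bruijn index 0. -/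
  | letPara : Tm S → Tm S → Tm S
  | cst : S.K → Tm S
  | star : Tm S
  | dup : Tm S
  | opc : Fin S.nops → Tm S
  | rhoc : Fin S.nrels → Tm S

namespace LAK

variable {S : RingStruct}

def upRen (f : ℕ → ℕ) : ℕ → ℕ
  | 0 => 0
  | n + 1 => f n + 1

def rename (f : ℕ → ℕ) : Tm S → Tm S
  | .var n => .var (f n)
  | .lam t => .lam (rename (upRen f) t)
  | .app t u => .app (rename f t) (rename f u)
  | .bang t => .bang (rename f t)
  | .letBang u t => .letBang (rename f u) (rename (upRen f) t)
  | .para t => .para (rename f t)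
  | .letPara u t => .letPara (rename f u) (rename (upRen f) t)
  | .cst k => .cst k
  | .star => .star
  | .dup => .dup
  | .opc i => .opc i
  | .rhoc i => .rhoc i

/-- Capture-avoiding substitution `t[u / var k]` (the remaining indices above `k`
are shifted down). -/
def sub : Tm S → ℕ → Tm S → Tm S
  | .var n, k, u => if n = k then rename (· + k) u else if k < n then .var (n - 1) else .var n
  | .lam t, k, u => .lam (sub t (k + 1) u)
  | .app t v, k, u => .app (sub t k u) (sub v k u)
  | .bang t, k, u => .bang (sub t k u)
  | .letBang v t, k, u => .letBang (sub v k u) (sub t (k + 1) u)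
  | .para t, k, u => .para (sub t k u)
  | .letPara v t, k, u => .letPara (sub v k u) (sub t (k + 1) u)
  | .cst a, _, _ => .cst a
  | .star, _, _ => .star
  | .dup, _, _ => .dup
  | .opc i, _, _ => .opc i
  | .rhoc i, _, _ => .rhoc i

/-! ## Measure, size, depth, well-formedness -/

/-- The measure ‖t‖. -/
def meas : Tm S → ℕ
  | .var _ => 1
  | .cst _ => 1
  | .star => 1
  | .opc _ => 2
  | .rhoc _ => 4
  | .dup => 5
  | .lam t => meas t + 1
  | .bang t => meas t + 1
  | .para t => meas t + 1
  | .app t u => meas t + meas u + 1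
  | .letBang u t => meas t + meas u + 1
  | .letPara u t => meas t + meas u + 1

/-- The size |t| : number of nodes of the syntactic tree. -/
def size : Tm S → ℕ
  | .var _ => 1
  | .cst _ => 1
  | .star => 1
  | .opc _ => 1
  | .rhoc _ => 1
  | .dup => 1
  | .lam t => size t + 1
  | .bang t => size t + 1
  | .para t => size t + 1
  | .app t u => size t + size u + 1
  | .letBang u t => size t + size u + 1
  | .letPara u t => size t + size u + 1

/-- Number of occurrences of the free variable `k`. -/
def countV : ℕ → Tm S → ℕ
  | k, .var n => if n = k then 1 else 0
  | k, .lam t => countV (k + 1) t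
  | k, .app t u => countV k t + countV k u
  | k, .bang t => countV k t
  | k, .letBang u t => countV k u + countV (k + 1) t
  | k, .para t => countV k t
  | k, .letPara u t => countV k u + countV (k + 1) t
  | _, _ => 0

/-- Total number of occurrences of free variables of index ≥ k. -/
def fvCount : ℕ → Tm S → ℕ
  | k, .var n => if k ≤ n then 1 else 0
  | k, .lam t => fvCount (k + 1) t
  | k, .app t u => fvCount k t + fvCount k u
  | k, .bang t => fvCount k t
  | k, .letBang u t => fvCount k u + fvCount (k + 1) t
  | k, .para t => fvCount k t
  | k, .letPara u t => fvCount k u + fvCount (k + 1) t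
  | _, _ => 0

/-- Terui's well-formedness conditions: λ- and §-bound variables occur at most
once, and a `!`-box has at most one occurrence of free variable. -/
def WF : Tm S → Prop
  | .lam t => countV 0 t ≤ 1 ∧ WF t
  | .app t u => WF t ∧ WF u
  | .bang t => fvCount 0 t ≤ 1 ∧ WF t
  | .letBang u t => WF u ∧ WF t
  | .para t => WF t
  | .letPara u t => countV 0 t ≤ 1 ∧ WF u ∧ WF t
  | _ => True

/-- Depth: maximal nesting of ! and § constructs. -/
def depth : Tm S → ℕ
  | .lam t => depth t
  | .app t u => max (depth t) (depth u)
  | .bang t => depth t + 1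
  | .para t => depth t + 1
  | .letBang u t => max (depth u) (depth t)
  | .letPara u t => max (depth u) (depth t)
  | _ => 0

/-! ## Syntactic sugar: booleans and tensor -/

def trueTm : Tm S := .lam (.lam (.var 1))
def falseTm : Tm S := .lam (.lam (.var 0))

/-- `t ⊗ u = λy.((y)t)u`. -/
def tensorTm (t u : Tm S) : Tm S :=
  .lam (.app (.app (.var 0) (rename (· + 1) t)) (rename (· + 1) u))

/-- `let u be x⊗y in t = (u)λx.λy.t`; in `t`, index 1 is the first component
and index 0 the second. -/
def letTen (u t : Tm S) : Tm S := .app u (.lam (.lam t))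

/-- Right-associated tensor of a list of terms. -/
def tensorList : List (Tm S) → Tm S
  | [] => .star
  | [t] => t
  | t :: u :: r => tensorTm t (tensorList (u :: r))

/-! ## Reduction -/

inductive Rule : Type where
  | beta | bang | para | com1 | com2 | dup | op | rho

/-- One-step reduction, labelled by its rule and the depth (number of `!`/`§`
constructs) at which it is performed. -/
inductive StepAt (S : RingStruct) : ℕ → Rule → Tm S → Tm S → Prop where
  | beta {d t u} : StepAt S d .beta (.app (.lam t) u) (sub t 0 u)
  | bang {d t u} : StepAt S d .bang (.letBang (.bang u) t) (sub t 0 u)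
  | para {d t u} : StepAt S d .para (.letPara (.para u) t) (sub t 0 u)
  | com1BB {d u₁ t₁ t₂} : StepAt S d .com1 (.letBang (.letBang u₁ t₁) t₂)
      (.letBang u₁ (.letBang t₁ (rename (upRen (· + 1)) t₂)))
  | com1BP {d u₁ t₁ t₂} : StepAt S d .com1 (.letPara (.letBang u₁ t₁) t₂)
      (.letBang u₁ (.letPara t₁ (rename (upRen (· + 1)) t₂)))
  | com1PB {d u₁ t₁ t₂} : StepAt S d .com1 (.letBang (.letPara u₁ t₁) t₂)
      (.letPara u₁ (.letBang t₁ (rename (upRen (· + 1)) t₂)))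
  | com1PP {d u₁ t₁ t₂} : StepAt S d .com1 (.letPara (.letPara u₁ t₁) t₂)
      (.letPara u₁ (.letPara t₁ (rename (upRen (· + 1)) t₂)))
  | com2B {d u₁ t₁ t₂} : StepAt S d .com2 (.app (.letBang u₁ t₁) t₂)
      (.letBang u₁ (.app t₁ (rename (· + 1) t₂)))
  | com2P {d u₁ t₁ t₂} : StepAt S d .com2 (.app (.letPara u₁ t₁) t₂)
      (.letPara u₁ (.app t₁ (rename (· + 1) t₂)))
  | dup {d k} : StepAt S d .dup (.app .dup (.cst k)) (tensorTm (.cst k) (.cst k))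
  | op {d} {i : Fin S.nops} {ks : Fin S.p → S.K} :
      StepAt S d .op (.app (.opc i) (tensorList ((List.ofFn ks).map .cst))) (.cst (S.op i ks))
  | rhoT {d} {i : Fin S.nrels} {ks : Fin S.p → S.K} : S.rel i ks →
      StepAt S d .rho (.app (.rhoc i) (tensorList ((List.ofFn ks).map .cst))) trueTm
  | rhoF {d} {i : Fin S.nrels} {ks : Fin S.p → S.K} : ¬ S.rel i ks →
      StepAt S d .rho (.app (.rhoc i) (tensorList ((List.ofFn ks).map .cst))) falseTm
  | congLam {d r t t'} : StepAt S d r t t' → StepAt S d r (.lam t) (.lam t')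
  | congApp₁ {d r t t' u} : StepAt S d r t t' → StepAt S d r (.app t u) (.app t' u)
  | congApp₂ {d r t u u'} : StepAt S d r u u' → StepAt S d r (.app t u) (.app t u')
  | congBang {d r t t'} : StepAt S d r t t' → StepAt S (d + 1) r (.bang t) (.bang t')
  | congPara {d r t t'} : StepAt S d r t t' → StepAt S (d + 1) r (.para t) (.para t')
  | congLetBang₁ {d r u u' t} : StepAt S d r u u' → StepAt S d r (.letBang u t) (.letBang u' t)
  | congLetBang₂ {d r u t t'} : StepAt S d r t t' → StepAt S d r (.letBang u t) (.letBang u t')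
  | congLetPara₁ {d r u u' t} : StepAt S d r u u' → StepAt S d r (.letPara u t) (.letPara u' t)
  | congLetPara₂ {d r u t t'} : StepAt S d r t t' → StepAt S d r (.letPara u t) (.letPara u t')

/-- One-step reduction labelled by its rule. -/
def Step (S : RingStruct) (r : Rule) (t u : Tm S) : Prop := ∃ d, StepAt S d r t u

/-- Many-step reduction. -/
def Red (S : RingStruct) : Tm S → Tm S → Prop :=
  Relation.ReflTransGen (fun a b => ∃ r, Step S r a b)

/-- `k` reduction steps, all at depth `d`, with rules satisfying `P`. -/
def MultiStepAt (S : RingStruct) (d : ℕ) (P : Rule → Prop) : ℕ → Tm S → Tm S → Prop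
  | 0, t, u => t = u
  | k + 1, t, u => ∃ s r, P r ∧ StepAt S d r t s ∧ MultiStepAt S d P k s u

/-- `StdRed S l j t u L` : a standard reduction sequence from `t` to `u` of total
length `L`, consisting of `l` levels starting at depth `j`: at each level, first
non-(!) steps at the current depth, then (!) steps at the current depth. -/
def StdRed (S : RingStruct) : ℕ → ℕ → Tm S → Tm S → ℕ → Prop
  | 0, _, t, u, L => t = u ∧ L = 0
  | l + 1, j, t, u, L => ∃ m k s₁ s₂ L',
      MultiStepAt S j (fun r => r ≠ Rule.bang) m t s₁ ∧
      MultiStepAt S j (fun r => r = Rule.bang) k s₁ s₂ ∧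
      StdRed S l (j + 1) s₂ u L' ∧ L = m + k + L'

/-! ## Types of LAL extended with the base type κ -/

inductive Ty (S : RingStruct) : Type where
  | tvar : ℕ → Ty S
  | lolli : Ty S → Ty S → Ty S
  | bang : Ty S → Ty S
  | para : Ty S → Ty S
  | all : Ty S → Ty S
  | kk : Ty S

def liftTy (c : ℕ) : Ty S → Ty S
  | .tvar n => if n < c then .tvar n else .tvar (n + 1)
  | .lolli A B => .lolli (liftTy c A) (liftTy c B)
  | .bang A => .bang (liftTy c A)
  | .para A => .para (liftTy c A)
  | .all A => .all (liftTy (c + 1) A)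
  | .kk => .kk

def substTy : Ty S → ℕ → Ty S → Ty S
  | .tvar n, k, B => if n = k then (liftTy 0)^[k] B else if k < n then .tvar (n - 1) else .tvar n
  | .lolli A C, k, B => .lolli (substTy A k B) (substTy C k B)
  | .bang A, k, B => .bang (substTy A k B)
  | .para A, k, B => .para (substTy A k B)
  | .all A, k, B => .all (substTy A (k + 1) B)
  | .kk, _, _ => .kk

/-- `A ⊗ B = ∀α.((A ⊸ B ⊸ α) ⊸ α)`. -/
def tensorTy (A B : Ty S) : Ty S :=
  .all (.lolli (.lolli (liftTy 0 A) (.lolli (liftTy 0 B) (.tvar 0))) (.tvar 0))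

def tensorListTy : List (Ty S) → Ty S
  | [] => .kk
  | [A] => A
  | A :: B :: r => tensorTy A (tensorListTy (B :: r))

/-- `κ^p = κ ⊗ ⋯ ⊗ κ`. -/
def kpow (S : RingStruct) : Ty S := tensorListTy (List.replicate S.p Ty.kk)

/-- `Bool = ∀α. α ⊸ α ⊸ α`. -/
def boolTy : Ty S := .all (.lolli (.tvar 0) (.lolli (.tvar 0) (.tvar 0)))

/-- Tally integers : `N = ∀α. !(α ⊸ α) ⊸ §(α ⊸ α)`. -/
def natTy : Ty S := .all (.lolli (.bang (.lolli (.tvar 0) (.tvar 0)))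
  (.para (.lolli (.tvar 0) (.tvar 0))))

/-- Lists over K : `L_κ = ∀α. !(κ ⊸ α ⊸ α) ⊸ §(α ⊸ α)`. -/
def listKTy : Ty S := .all (.lolli (.bang (.lolli .kk (.lolli (.tvar 0) (.tvar 0))))
  (.para (.lolli (.tvar 0) (.tvar 0))))

/-! ## Typing (natural-deduction presentation of LAL, with discharged marks) -/

inductive Mark : Type where
  | pl  -- plain
  | db  -- !-discharged
  | dp  -- §-discharged
  deriving DecidableEq

/-- Transposition of de Bruijn indices `i` and `i+1`. -/
def swapF (i : ℕ) : ℕ → ℕ := fun n => if n = i then i + 1 else if n = i + 1 then i else n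

inductive Tj (S : RingStruct) : List (Mark × Ty S) → Tm S → Ty S → Prop where
  | ax (A : Ty S) : Tj S [(.pl, A)] (.var 0) A
  | weak {Γ t A} (e : Mark × Ty S) : Tj S Γ t A → Tj S (e :: Γ) (rename (· + 1) t) A
  | exch {Γ Δ : List (Mark × Ty S)} {a b t A} :
      Tj S (Γ ++ a :: b :: Δ) t A → Tj S (Γ ++ b :: a :: Δ) (rename (swapF Γ.length) t) A
  | cntr {Γ t A B} : Tj S ((.db, B) :: (.db, B) :: Γ) t A →
      Tj S ((.db, B) :: Γ) (rename Nat.pred t) A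
  | cut {Γ Δ : List (Mark × Ty S)} {u t A C} : Tj S Δ u A → Tj S ((.pl, A) :: Γ) t C →
      Tj S (Γ ++ Δ) (sub t 0 (rename (· + Γ.length) u)) C
  | lam {Γ t A B} : Tj S ((.pl, A) :: Γ) t B → Tj S Γ (.lam t) (.lolli A B)
  | app {Γ Δ : List (Mark × Ty S)} {t u A B} : Tj S Γ t (.lolli A B) → Tj S Δ u A →
      Tj S (Γ ++ Δ) (.app t (rename (· + Γ.length) u)) B
  | allI {Γ : List (Mark × Ty S)} {t A} :
      Tj S (Γ.map (fun e => (e.1, liftTy 0 e.2))) t A → Tj S Γ t (.all A)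
  | allE {Γ t A} (B : Ty S) : Tj S Γ t (.all A) → Tj S Γ t (substTy A 0 B)
  | bangI₀ {t A} : Tj S [] t A → Tj S [] (.bang t) (.bang A)
  | bangI₁ {t A B} : Tj S [(.pl, B)] t A → Tj S [(.db, B)] (.bang t) (.bang A)
  | bangE {Γ Δ : List (Mark × Ty S)} {u t A C} : Tj S Δ u (.bang A) →
      Tj S ((.db, A) :: Γ) t C →
      Tj S (Γ ++ Δ) (.letBang (rename (· + Γ.length) u) t) C
  | paraI {Γ Γ' : List (Mark × Ty S)} {t A} : Tj S Γ t A →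
      (∀ e ∈ Γ, e.1 = Mark.pl) →
      List.Forall₂ (fun (e e' : Mark × Ty S) => e'.2 = e.2 ∧ e'.1 ≠ Mark.pl) Γ Γ' →
      Tj S Γ' (.para t) (.para A)
  | paraE {Γ Δ : List (Mark × Ty S)} {u t A C} : Tj S Δ u (.para A) →
      Tj S ((.dp, A) :: Γ) t C →
      Tj S (Γ ++ Δ) (.letPara (rename (· + Γ.length) u) t) C
  | cstR (k : S.K) : Tj S [] (.cst k) .kk
  | starR : Tj S [] .star .kk
  | dupR : Tj S [] .dup (.lolli .kk (tensorTy .kk .kk))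
  | opR (i : Fin S.nops) : Tj S [] (.opc i) (.lolli (kpow S) .kk)
  | rhoR (i : Fin S.nrels) : Tj S [] (.rhoc i) (.lolli (kpow S) boolTy)

/-! ## Church encodings -/

/-- Encoding of a tape symbol: `k̲` for `some k`, `⋆` for the blank `□`. -/
def encK : Option S.K → Tm S
  | some k => .cst k
  | none => .star

/-- Church encoding of a list of tape symbols, of type `L_κ`. -/
def encListO (l : List (Option S.K)) : Tm S :=
  .lam (.letBang (.var 0) (.para (.lam
    (l.foldr (fun a acc => .app (.app (.var 1) (encK a)) acc) (.var 0)))))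

/-- Church encoding `w̲` of a list over K, of type `L_κ`. -/
def encList (w : List S.K) : Tm S := encListO (w.map some)

/-- Church numeral `n̲` of type `N`. -/
def churchNat (n : ℕ) : Tm S :=
  .lam (.letBang (.var 0) (.para (.lam ((fun b => Tm.app (.var 1) b)^[n] (.var 0)))))

/-! ## Encoding of BSS states and configurations -/

/-- From a right-nested tuple (of `n+1` components) in variable 0, extract the
last component. -/
def extractV : ℕ → Tm S
  | 0 => .var 0
  | n + 1 => letTen (.var 0) (extractV n)

/-- Body of the `i`-th state selector, for `n` states: variable 0 holds a tuple
`x₀ ⊗ (⋯ ⊗ (x_{n-1} ⊗ v))` and the result is `(x_i)v`. -/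
def selBody : ℕ → ℕ → Tm S
  | 0, _ => .var 0
  | _ + 1, 0 => letTen (.var 0) (.app (.var 1) (extractV 0))
  | n + 1, i + 1 => letTen (.var 0) (selBody n i)

/-- Encoding of the state `q_i` among `n` states:
`q_i = λz. let z be x₀⊗⋯⊗x_{n-1}⊗v in (x_i)v`. -/
def stateSel (n : ℕ) (i : Fin n) : Tm S := .lam (selBody n i.val)

/-- Type of encoded states:
`Q = ∀α∀β. (((α ⊸ β) ⊗ ⋯ ⊗ (α ⊸ β)) ⊗ α) ⊸ β` (`n` function components). -/
def Qty (S : RingStruct) (n : ℕ) : Ty S :=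
  .all (.all (.lolli
    (tensorListTy (List.replicate n (Ty.lolli (.tvar 1) (.tvar 0)) ++ [Ty.tvar 1]))
    (.tvar 0)))

/-- Type of configurations (with `n` encoded states):
`C = ∀α. !(κ ⊸ α ⊸ α) ⊸ §α ⊸ §α ⊸ §(α ⊗ α ⊗ Q)`. -/
def Cty (S : RingStruct) (n : ℕ) : Ty S :=
  .all (.lolli (.bang (.lolli .kk (.lolli (.tvar 0) (.tvar 0))))
    (.lolli (.para (.tvar 0)) (.lolli (.para (.tvar 0))
      (.para (tensorTy (.tvar 0) (tensorTy (.tvar 0) (liftTy 0 (Qty S n))))))))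

/-- Type of configurations with window:
`CW = ∀α. !(κ ⊸ α ⊸ α) ⊸ §α ⊸ §α ⊸ §(α ⊗ κ^p ⊗ κ^p ⊗ α ⊗ Q)`. -/
def CWty (S : RingStruct) (n : ℕ) : Ty S :=
  .all (.lolli (.bang (.lolli .kk (.lolli (.tvar 0) (.tvar 0))))
    (.lolli (.para (.tvar 0)) (.lolli (.para (.tvar 0))
      (.para (tensorTy (.tvar 0) (tensorTy (kpow S) (tensorTy (kpow S)
        (tensorTy (.tvar 0) (liftTy 0 (Qty S n))))))))))

/-- Encoding `⟨f⁻, f⁺, q⟩` of a configuration, of type `C`: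
`λg λx λx'. let g be !g' in let x be §x₀ in let x' be §x₀' in
  §( (g' k₁⁻ (⋯ x₀)) ⊗ (g' k₁⁺ (⋯ x₀')) ⊗ q )`. -/
def encCfg (fm fp : List (Option S.K)) (q : Tm S) : Tm S :=
  .lam (.lam (.lam (.letBang (.var 2) (.letPara (.var 2) (.letPara (.var 2)
    (.para (tensorTm
      (fm.foldr (fun a acc => Tm.app (.app (.var 2) (encK a)) acc) (.var 1))
      (tensorTm
        (fp.foldr (fun a acc => Tm.app (.app (.var 2) (encK a)) acc) (.var 0))
        q))))))))

/-- The window of length `p` read from a half-tape (missing values are `⋆`). -/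
def winOf (S : RingStruct) (l : List (Option S.K)) : List (Tm S) :=
  (List.range S.p).map (fun j => encK (l.getD j none))

/-- Encoding `⟨h⁻, k⃗⁻, k⃗⁺, h⁺, q⟩` of a configuration with window, of type `CW`. -/
def encCfgW (hm hp : List (Option S.K)) (wm wp : List (Tm S)) (q : Tm S) : Tm S :=
  .lam (.lam (.lam (.letBang (.var 2) (.letPara (.var 2) (.letPara (.var 2)
    (.para (tensorTm
      (hm.foldr (fun a acc => Tm.app (.app (.var 2) (encK a)) acc) (.var 1))
      (tensorTm (tensorList wm) (tensorTm (tensorList wp)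
        (tensorTm
          (hp.foldr (fun a acc => Tm.app (.app (.var 2) (encK a)) acc) (.var 0))
          q))))))))))

/-! ## BSS machines over 𝕂 -/

/-- Action associated to a state: computation, branch, or shift.
Next states live in `Fin n ⊕ Bool` where `Sum.inr false = q_F⁰` (reject) and
`Sum.inr true = q_F¹` (accept). -/
inductive Act (S : RingStruct) (n : ℕ) : Type where
  | comp : Fin S.nops → (Fin n ⊕ Bool) → Act S n
  | branch : Fin S.nrels → (Fin n ⊕ Bool) → (Fin n ⊕ Bool) → Act S n
  | shift : Bool → (Fin n ⊕ Bool) → Act S n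

/-- A BSS machine over 𝕂: finitely many states `q_0, …, q_{n-1}` (with `q_0`
the input node), and an action for each state. -/
structure BSS (S : RingStruct) : Type where
  n : ℕ
  n_pos : 0 < n
  δ : Fin n → Act S n

/-- A configuration: bi-infinite tape over `K ∪ {□}` (`□ = none`), head
position, and current state (possibly final). -/
structure Cfg (S : RingStruct) (M : BSS S) : Type where
  tape : ℤ → Option S.K
  pos : ℤ
  state : Fin M.n ⊕ Bool

/-- Extension of `op_i` to tape symbols: defined when all `p` read cells are
non-blank. -/
def applyOp (S : RingStruct) (i : Fin S.nops) (v : Fin S.p → Option S.K) : Option S.K :=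
  if h : ∀ j, (v j).isSome then some (S.op i (fun j => (v j).get (h j))) else none

/-- Extension of `ρ_i` to tape symbols. -/
def holdsRel (S : RingStruct) (i : Fin S.nrels) (v : Fin S.p → Option S.K) : Prop :=
  ∃ h : ∀ j, (v j).isSome, S.rel i (fun j => (v j).get (h j))

open Classical in
/-- One transition of the machine (identity on final states). -/
noncomputable def stepCfg {S : RingStruct} (M : BSS S) (c : Cfg S M) : Cfg S M :=
  match c.state with
  | Sum.inr _ => c
  | Sum.inl q =>
    match M.δ q with
    | Act.comp i next =>
        { tape := Function.update c.tape c.pos (applyOp S i (fun j => c.tape (c.pos + (j.1 : ℤ)))),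
          pos := c.pos, state := next }
    | Act.branch i qt qf =>
        { tape := c.tape, pos := c.pos,
          state := if holdsRel S i (fun j => c.tape (c.pos + (j.1 : ℤ))) then qt else qf }
    | Act.shift dir next =>
        { tape := c.tape, pos := c.pos + (if dir then 1 else -1), state := next }

/-- The tape holding a word of tape symbols in cells `1, …, |w|`. -/
def tapeOfListO (S : RingStruct) (w : List (Option S.K)) : ℤ → Option S.K :=
  fun i => if 1 ≤ i then w.getD (i.toNat - 1) none else none

/-- The tape holding `w ∈ K^∞` in cells `1, …, |w|`. -/
def tapeOfList (S : RingStruct) (w : List S.K) : ℤ → Option S.K :=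
  tapeOfListO S (w.map some)

/-- Initial configuration `(f_w, 1, q_0)`. -/
def initCfg {S : RingStruct} (M : BSS S) (w : List S.K) : Cfg S M :=
  ⟨tapeOfList S w, 1, Sum.inl ⟨0, M.n_pos⟩⟩

/-- Terminal (accepting) configuration `(f_v, 1, q_F¹)`. -/
def finalCfg {S : RingStruct} (M : BSS S) (v : List S.K) : Cfg S M :=
  ⟨tapeOfList S v, 1, Sum.inr true⟩

/-- `FP(𝕂)`: functions on words over K computable in polynomial time by a BSS
machine over 𝕂. -/
def FPK (S : RingStruct) (f : List S.K → List S.K) : Prop :=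
  ∃ (M : BSS S) (P : Polynomial ℕ), ∀ w : List S.K,
    ∃ k : ℕ, k ≤ P.eval w.length ∧ (stepCfg M)^[k] (initCfg M w) = finalCfg M (f w)

/-- The bi-infinite tape determined by the lists of symbols at the left and at
the right of position `pos` (`fp` starts at `pos`, `fm` at `pos - 1` going left). -/
def tapeRel (S : RingStruct) (fm fp : List (Option S.K)) (pos : ℤ) : ℤ → Option S.K :=
  fun i => if i < pos then fm.getD (pos - 1 - i).toNat none else fp.getD (i - pos).toNat none

/-- Encoding of machine states (including the two final states) as state
selectors among `M.n + 2` states. -/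
def encState {S : RingStruct} (M : BSS S) : Fin M.n ⊕ Bool → Tm S
  | Sum.inl q => stateSel (M.n + 2) ⟨q.1, by have := q.2; omega⟩
  | Sum.inr false => stateSel (M.n + 2) ⟨M.n, by omega⟩
  | Sum.inr true => stateSel (M.n + 2) ⟨M.n + 1, by omega⟩

/-- The configuration with a word of tape symbols written from cell 1, head on
cell 1, in the initial state: used to feed encodings of λ-terms to a machine. -/
def cfgO {S : RingStruct} (M : BSS S) (w : List (Option S.K)) : Cfg S M :=
  ⟨tapeOfListO S w, 1, Sum.inl ⟨0, M.n_pos⟩⟩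

/-- The machine `M`, started on the word `w`, reaches the word `w'` within `T`
steps. -/
def SimWithin {S : RingStruct} (M : BSS S) (w w' : List (Option S.K)) (T : ℕ) : Prop :=
  ∃ k ≤ T, (stepCfg M)^[k] (cfgO M w) = cfgO M w'

theorem meas_rename (t : Tm S) : ∀ f, meas (rename f t) = meas t := by
  induction t <;> intro f <;> simp [rename, meas, *]

theorem meas_sub (t : Tm S) : ∀ k u,
    meas (sub t k u) + countV k t = meas t + countV k t * meas u := by
  induction t <;> intro k u <;> simp only [sub, countV, meas, Nat.add_mul, Nat.zero_mul]
  case var n =>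
    split_ifs <;> simp [meas, meas_rename] <;> omega
  case lam ih => have := ih (k + 1) u; omega
  case bang ih => have := ih k u; omega
  case para ih => have := ih k u; omega
  case app ih1 ih2 => have := ih1 k u; have := ih2 k u; omega
  case letBang ih1 ih2 => have := ih1 k u; have := ih2 (k + 1) u; omega
  case letPara ih1 ih2 => have := ih1 k u; have := ih2 (k + 1) u; omega

theorem meas_sub_le {t : Tm S} {k : ℕ} {u : Tm S} (h : countV k t ≤ 1) :
    meas (sub t k u) ≤ meas t + meas u := by
  have := meas_sub t k u
  interval_cases h : countV k t <;> omega

end LAK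

open LAK in
/-- If `t → t'` by a rule other than (!), (com1), (com2) then
‖t'‖ < ‖t‖; if by (com1) or (com2) then ‖t'‖ = ‖t‖. -/
theorem measure_decrease (S : RingStruct) (d : ℕ) (r : Rule) (t t' : Tm S)
    (hwf : WF t) (h : StepAt S d r t t') :
    ((r ≠ Rule.bang ∧ r ≠ Rule.com1 ∧ r ≠ Rule.com2) → meas t' < meas t) ∧
    ((r = Rule.com1 ∨ r = Rule.com2) → meas t' = meas t) := by
  induction h with
  | @beta d t u =>
      refine ⟨fun _ => ?_, by rintro (h | h) <;> simp at h⟩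
      obtain ⟨⟨hc, _⟩, _⟩ := hwf
      have := meas_sub_le (u := u) hc
      simp only [meas]; omega
  | @bang d t u =>
      exact ⟨fun h => absurd rfl h.1, by rintro (h | h) <;> simp at h⟩
  | @para d t u =>
      refine ⟨fun _ => ?_, by rintro (h | h) <;> simp at h⟩
      obtain ⟨hc, _, _⟩ := hwf
      have := meas_sub_le (u := u) hc
      simp only [meas]; omega
  | com1BB => exact ⟨fun h => absurd rfl h.2.1, fun _ => by simp [meas, meas_rename]; omega⟩
  | com1BP => exact ⟨fun h => absurd rfl h.2.1, fun _ => by simp [meas, meas_rename]; omega⟩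
  | com1PB => exact ⟨fun h => absurd rfl h.2.1, fun _ => by simp [meas, meas_rename]; omega⟩
  | com1PP => exact ⟨fun h => absurd rfl h.2.1, fun _ => by simp [meas, meas_rename]; omega⟩
  | com2B => exact ⟨fun h => absurd rfl h.2.2, fun _ => by simp [meas, meas_rename]; omega⟩
  | com2P => exact ⟨fun h => absurd rfl h.2.2, fun _ => by simp [meas, meas_rename]; omega⟩
  | dup => exact ⟨fun _ => by simp [meas, tensorTm, rename], by rintro (h | h) <;> simp at h⟩
  | op =>
      refine ⟨fun _ => ?_, by rintro (h | h) <;> simp at h⟩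
      simp only [meas]; omega
  | rhoT h =>
      refine ⟨fun _ => ?_, by rintro (h | h) <;> simp at h⟩
      simp only [trueTm, meas]; omega
  | rhoF h =>
      refine ⟨fun _ => ?_, by rintro (h | h) <;> simp at h⟩
      simp only [falseTm, meas]; omega
  | congLam h ih =>
      have := ih hwf.2
      exact ⟨fun hr => by have := this.1 hr; simp [meas]; omega,
        fun hr => by have := this.2 hr; simp [meas]; omega⟩
  | congApp₁ h ih =>
      have := ih hwf.1
      exact ⟨fun hr => by have := this.1 hr; simp [meas]; omega,
        fun hr => by have := this.2 hr; simp [meas]; omega⟩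
  | congApp₂ h ih =>
      have := ih hwf.2
      exact ⟨fun hr => by have := this.1 hr; simp [meas]; omega,
        fun hr => by have := this.2 hr; simp [meas]; omega⟩
  | congBang h ih =>
      have := ih hwf.2
      exact ⟨fun hr => by have := this.1 hr; simp [meas]; omega,
        fun hr => by have := this.2 hr; simp [meas]; omega⟩
  | congPara h ih =>
      have := ih hwf
      exact ⟨fun hr => by have := this.1 hr; simp [meas]; omega,
        fun hr => by have := this.2 hr; simp [meas]; omega⟩
  | congLetBang₁ h ih =>
      have := ih hwf.1
      exact ⟨fun hr => by have := this.1 hr; simp [meas]; omega,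
        fun hr => by have := this.2 hr; simp [meas]; omega⟩
  | congLetBang₂ h ih =>
      have := ih hwf.2
      exact ⟨fun hr => by have := this.1 hr; simp [meas]; omega,
        fun hr => by have := this.2 hr; simp [meas]; omega⟩
  | congLetPara₁ h ih =>
      have := ih hwf.2.1
      exact ⟨fun hr => by have := this.1 hr; simp [meas]; omega,
        fun hr => by have := this.2 hr; simp [meas]; omega⟩
  | congLetPara₂ h ih =>
      have := ih hwf.2.2
      exact ⟨fun hr => by have := this.1 hr; simp [meas]; omega,
        fun hr => by have := this.2 hr; simp [meas]; omega⟩
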